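/- arXiv:1204.1921 — 3 statements merged into one kernel-verified Lean document; each statement's English description precedes it below -/
import Mathlib

section
/- Let A₀ and A₁ be 2×2 real matrices that are Hurwitz (both eigenvalues with negative real part), so in particular det(A₀) > 0 and det(A₁) > 0, and for λ ∈ (0,1) set A_λ = (1-λ)A₀ + λA₁. If for some λ ∈ (0,1) the matrix A_λ has two real eigenvalues of opposite signs (i.e. det(A_λ) < 0), then Tr(A₀)Tr(A₁) - Tr(A₀A₁) < -2√(det(A₀)det(A₁)). -/
theorem stmt_0 (A₀ A₁ : Matrix (Fin 2) (Fin 2) ℝ)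
    (h0tr : A₀.trace < 0) (h0det : 0 < A₀.det)
    (h1tr : A₁.trace < 0) (h1det : 0 < A₁.det)
    (hlam : ∃ l : ℝ, l ∈ Set.Ioo (0:ℝ) 1 ∧ ((1 - l) • A₀ + l • A₁).det < 0) :
    A₀.trace * A₁.trace - (A₀ * A₁).trace < -2 * Real.sqrt (A₀.det * A₁.det) := by
  obtain ⟨l, ⟨hl0, hl1⟩, hdetneg⟩ := hlam
  have key : ((1 - l) • A₀ + l • A₁).det
      = (1 - l)^2 * A₀.det + l^2 * A₁.det
        + l * (1 - l) * (A₀.trace * A₁.trace - (A₀ * A₁).trace) := by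
    simp [Matrix.det_fin_two, Matrix.trace_fin_two, Matrix.mul_apply,
      Fin.sum_univ_two]
    ring
  have ha : Real.sqrt A₀.det ^ 2 = A₀.det := Real.sq_sqrt h0det.le
  have hb : Real.sqrt A₁.det ^ 2 = A₁.det := Real.sq_sqrt h1det.le
  have hab : Real.sqrt (A₀.det * A₁.det) = Real.sqrt A₀.det * Real.sqrt A₁.det :=
    Real.sqrt_mul h0det.le _
  have ha0 : 0 < Real.sqrt A₀.det := Real.sqrt_pos.mpr h0det
  have hb0 : 0 < Real.sqrt A₁.det := Real.sqrt_pos.mpr h1det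
  rw [key] at hdetneg
  rw [hab]
  nlinarith [sq_nonneg ((1 - l) * Real.sqrt A₀.det - l * Real.sqrt A₁.det),
    mul_pos hl0 (sub_pos.mpr hl1), mul_pos ha0 hb0, sq_nonneg l, sq_nonneg (1 - l)]
end

section
/- Let A₀, A₁ be 2×2 real matrices with positive determinants. If Tr(A₀)Tr(A₁) - Tr(A₀A₁) < -2√(det(A₀)det(A₁)), then there exists λ ∈ (0,1) such that det((1-λ)A₀ + λA₁) < 0, i.e. A_λ has a positive and a negative real eigenvalue. -/
open Set

theorem Matrix.det_fin_two_smul_add_smul {R : Type*} [CommRing R]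
    (A B : Matrix (Fin 2) (Fin 2) R) (a b : R) :
    (a • A + b • B).det =
      a ^ 2 * A.det + a * b * (A.trace * B.trace - (A * B).trace) + b ^ 2 * B.det := by
  simp only [Matrix.det_fin_two, Matrix.trace_fin_two, Matrix.mul_apply, Matrix.add_apply,
    Matrix.smul_apply, Fin.sum_univ_two, smul_eq_mul]
  ring

/-- With `s = √a`, `t = √c` the point `l = s / (s + t)` works: there the form equals
`s t (2 s t + b) / (s + t) ^ 2`. -/
theorem exists_mem_Ioo_quadratic_neg {a b c : ℝ} (ha : 0 < a) (hc : 0 < c)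
    (hb : b < -2 * √(a * c)) :
    ∃ l ∈ Ioo (0 : ℝ) 1, (1 - l) ^ 2 * a + (1 - l) * l * b + l ^ 2 * c < 0 := by
  set s := √a
  set t := √c
  have hs : 0 < s := Real.sqrt_pos.mpr ha
  have ht : 0 < t := Real.sqrt_pos.mpr hc
  have hst : 0 < s + t := add_pos hs ht
  have hb' : b < -2 * (s * t) := by rwa [Real.sqrt_mul ha.le] at hb
  refine ⟨s / (s + t), ⟨by positivity, (div_lt_one hst).mpr (by linarith)⟩, ?_⟩
  have hl : 1 - s / (s + t) = t / (s + t) := by field_simp; ring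
  have value : (t / (s + t)) ^ 2 * a + t / (s + t) * (s / (s + t)) * b + (s / (s + t)) ^ 2 * c
      = s * t * (2 * (s * t) + b) / (s + t) ^ 2 := by
    rw [← Real.sq_sqrt ha.le, ← Real.sq_sqrt hc.le]
    field_simp
    ring
  rw [hl, value]
  exact div_neg_of_neg_of_pos (mul_neg_of_pos_of_neg (by positivity) (by linarith)) (by positivity)

theorem stmt_1 (A₀ A₁ : Matrix (Fin 2) (Fin 2) ℝ)
    (h0det : 0 < A₀.det) (h1det : 0 < A₁.det)
    (h : A₀.trace * A₁.trace - (A₀ * A₁).trace < -2 * Real.sqrt (A₀.det * A₁.det)) :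
    ∃ l : ℝ, l ∈ Set.Ioo (0:ℝ) 1 ∧ ((1 - l) • A₀ + l • A₁).det < 0 := by
  obtain ⟨l, hl, hneg⟩ := exists_mem_Ioo_quadratic_neg h0det h1det h
  exact ⟨l, hl, by rwa [Matrix.det_fin_two_smul_add_smul]⟩
end

section
/- Let A₀, A₁ be 2×2 Hurwitz matrices, λ ∈ (0,1), and let θ be such that d_λ(θ) := (1-λ)d_0(θ) + λ d_1(θ) = 0, where d_i(θ) = ⟨A_i e_θ, e_{θ+π/2}⟩. If additionally A_λ = (1-λ)A₀ + λA₁ has a positive real eigenvalue (and a negative one), then d_0(θ) ≠ 0, d_1(θ) ≠ 0, and d_0(θ)·d_1(θ) < 0. -/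
open Matrix Real Polynomial

lemma charpoly_root_fin_two (M : Matrix (Fin 2) (Fin 2) ℝ) (μ : ℝ)
    (h : M.charpoly.IsRoot μ) : μ^2 - M.trace * μ + M.det = 0 := by
  have hc : M.charpoly = (X - C (M 0 0)) * (X - C (M 1 1)) - -C (M 0 1) * -C (M 1 0) := by
    rw [Matrix.charpoly, Matrix.det_fin_two]
    rw [Matrix.charmatrix_apply_eq, Matrix.charmatrix_apply_eq,
      Matrix.charmatrix_apply_ne _ _ _ (by decide), Matrix.charmatrix_apply_ne _ _ _ (by decide)]
  rw [hc] at h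
  simp only [Polynomial.IsRoot, eval_sub, eval_mul, eval_neg, eval_X, eval_C] at h
  rw [Matrix.trace_fin_two, Matrix.det_fin_two]
  linear_combination h

lemma neg_root_of_quad (T D c : ℝ) (hT : T < 0) (hD : 0 < D)
    (h : c^2 - T*c + D = 0) : c < 0 ∧ T - c < 0 := by
  have hc : c < 0 := by
    by_contra hcon
    push_neg at hcon
    have h1 : T * c ≤ 0 := mul_nonpos_of_nonpos_of_nonneg hT.le hcon
    linarith [sq_nonneg c]
  refine ⟨hc, ?_⟩
  by_contra hcon
  push_neg at hcon
  have h2 : c * (T - c) ≤ 0 := mul_nonpos_of_nonpos_of_nonneg hc.le hcon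
  have h3 : c * (T - c) = D := by linear_combination -h
  linarith

lemma quad_aux' (a b c d x y : ℝ) (h1 : x^2 + y^2 = 1) :
    (a*x^2 + (b+c)*(x*y) + d*y^2)^2 - (a+d)*(a*x^2 + (b+c)*(x*y) + d*y^2) + (a*d - b*c)
      = -((c*x^2 + (d-a)*(x*y) - b*y^2) * (b*x^2 + (d-a)*(x*y) - c*y^2)) := by
  linear_combination ((a+d)*(a*x^2 + (b+c)*(x*y) + d*y^2) - (a*d-b*c)*(x^2+y^2+1)) * h1

theorem stmt_11 (A₀ A₁ : Matrix (Fin 2) (Fin 2) ℝ)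
    (h0tr : A₀.trace < 0) (h0det : 0 < A₀.det)
    (h1tr : A₁.trace < 0) (h1det : 0 < A₁.det)
    (l : ℝ) (hl : l ∈ Set.Ioo (0:ℝ) 1)
    (d₀ d₁ dl : ℝ → ℝ)
    (hd₀ : ∀ θ, d₀ θ = A₀.mulVec ![cos θ, sin θ] ⬝ᵥ ![-sin θ, cos θ])
    (hd₁ : ∀ θ, d₁ θ = A₁.mulVec ![cos θ, sin θ] ⬝ᵥ ![-sin θ, cos θ])
    (hdl : ∀ θ, dl θ = (1 - l) * d₀ θ + l * d₁ θ)
    (hpos : ∃ μ : ℝ, 0 < μ ∧ ((1 - l) • A₀ + l • A₁).charpoly.IsRoot μ)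
    (hneg : ∃ ν : ℝ, ν < 0 ∧ ((1 - l) • A₀ + l • A₁).charpoly.IsRoot ν)
    (θ : ℝ) (hθ : dl θ = 0) :
    d₀ θ ≠ 0 ∧ d₁ θ ≠ 0 ∧ d₀ θ * d₁ θ < 0 := by
  obtain ⟨hl0, hl1⟩ := hl
  set x := cos θ with hx
  set y := sin θ with hy
  have h1 : x^2 + y^2 = 1 := cos_sq_add_sin_sq θ
  have e0 : d₀ θ = A₀ 1 0 * x^2 + (A₀ 1 1 - A₀ 0 0)*(x*y) - A₀ 0 1 * y^2 := by
    rw [hd₀]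
    simp [Matrix.mulVec, dotProduct, Fin.sum_univ_two]
    ring
  have e1 : d₁ θ = A₁ 1 0 * x^2 + (A₁ 1 1 - A₁ 0 0)*(x*y) - A₁ 0 1 * y^2 := by
    rw [hd₁]
    simp [Matrix.mulVec, dotProduct, Fin.sum_univ_two]
    ring
  rw [hdl θ] at hθ
  -- hθ : (1-l) * d₀ θ + l * d₁ θ = 0
  have key : d₀ θ ≠ 0 := by
    intro hd0
    have hd1 : d₁ θ = 0 := by
      have h' : l * d₁ θ = 0 := by rw [hd0, mul_zero, zero_add] at hθ; exact hθ
      rcases mul_eq_zero.mp h' with h | h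
      · exact absurd h (ne_of_gt hl0)
      · exact h
    set M := (1 - l) • A₀ + l • A₁ with hM
    obtain ⟨μ, hμpos, hμroot⟩ := hpos
    have hMtr : M.trace = (1-l) * A₀.trace + l * A₁.trace := by
      simp [hM, Matrix.trace_smul, smul_eq_mul]
    have hMent : ∀ i j, M i j = (1-l) * A₀ i j + l * A₁ i j := by
      intro i j; simp [hM, Matrix.add_apply, Matrix.smul_apply, smul_eq_mul]
    have hrootμ : μ^2 - M.trace * μ + M.det = 0 :=
      charpoly_root_fin_two M μ hμroot
    -- eigenvalues c₀, c₁ of A₀, A₁ in direction e_θ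
    set c₀ := A₀ 0 0 * x^2 + (A₀ 0 1 + A₀ 1 0)*(x*y) + A₀ 1 1 * y^2 with hc₀
    set c₁ := A₁ 0 0 * x^2 + (A₁ 0 1 + A₁ 1 0)*(x*y) + A₁ 1 1 * y^2 with hc₁
    have htr0 : A₀.trace = A₀ 0 0 + A₀ 1 1 := Matrix.trace_fin_two A₀
    have hdet0 : A₀.det = A₀ 0 0 * A₀ 1 1 - A₀ 0 1 * A₀ 1 0 := Matrix.det_fin_two A₀
    have htr1 : A₁.trace = A₁ 0 0 + A₁ 1 1 := Matrix.trace_fin_two A₁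
    have hdet1 : A₁.det = A₁ 0 0 * A₁ 1 1 - A₁ 0 1 * A₁ 1 0 := Matrix.det_fin_two A₁
    have hq0 : c₀^2 - A₀.trace * c₀ + A₀.det = 0 := by
      have := quad_aux' (A₀ 0 0) (A₀ 0 1) (A₀ 1 0) (A₀ 1 1) x y h1
      rw [htr0, hdet0, hc₀]
      rw [e0] at hd0
      linear_combination this - (A₀ 0 1*x^2 + (A₀ 1 1 - A₀ 0 0)*(x*y) - A₀ 1 0*y^2) * hd0
    have hq1 : c₁^2 - A₁.trace * c₁ + A₁.det = 0 := by
      have := quad_aux' (A₁ 0 0) (A₁ 0 1) (A₁ 1 0) (A₁ 1 1) x y h1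
      rw [htr1, hdet1, hc₁]
      rw [e1] at hd1
      linear_combination this - (A₁ 0 1*x^2 + (A₁ 1 1 - A₁ 0 0)*(x*y) - A₁ 1 0*y^2) * hd1
    obtain ⟨hc0neg, hr0neg⟩ := neg_root_of_quad _ _ _ h0tr h0det hq0
    obtain ⟨hc1neg, hr1neg⟩ := neg_root_of_quad _ _ _ h1tr h1det hq1
    -- cM := (1-l) c₀ + l c₁ is an eigenvalue of M
    set cM := (1-l) * c₀ + l * c₁ with hcM
    have hdM : M 1 0 * x^2 + (M 1 1 - M 0 0)*(x*y) - M 0 1 * y^2 = 0 := by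
      rw [hMent 1 0, hMent 1 1, hMent 0 0, hMent 0 1]
      rw [e0] at hd0; rw [e1] at hd1
      linear_combination (1-l) * hd0 + l * hd1
    have hcMeq : cM = M 0 0 * x^2 + (M 0 1 + M 1 0)*(x*y) + M 1 1 * y^2 := by
      rw [hMent 0 0, hMent 0 1, hMent 1 0, hMent 1 1, hcM, hc₀, hc₁]; ring
    have hMtr2 : M.trace = M 0 0 + M 1 1 := Matrix.trace_fin_two M
    have hMdet : M.det = M 0 0 * M 1 1 - M 0 1 * M 1 0 := Matrix.det_fin_two M
    have hqM : cM^2 - M.trace * cM + M.det = 0 := by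
      have := quad_aux' (M 0 0) (M 0 1) (M 1 0) (M 1 1) x y h1
      rw [hMtr2, hMdet, hcMeq]
      linear_combination this - (M 0 1*x^2 + (M 1 1 - M 0 0)*(x*y) - M 1 0*y^2) * hdM
    -- μ and cM are roots of the same monic quadratic
    have hfact : (μ - cM) * (μ + cM - M.trace) = 0 := by
      linear_combination hrootμ - hqM
    have hcMneg : cM < 0 := by
      rw [hcM]
      have a1 := mul_neg_of_pos_of_neg hl0 hc1neg
      have a2 := mul_neg_of_pos_of_neg (by linarith : (0:ℝ) < 1 - l) hc0neg
      linarith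
    have hTm : M.trace - cM < 0 := by
      rw [hMtr, hcM]
      have a1 := mul_neg_of_pos_of_neg hl0 hr1neg
      have a2 := mul_neg_of_pos_of_neg (by linarith : (0:ℝ) < 1 - l) hr0neg
      linarith
    have hpos1 : 0 < (μ - cM) * (μ + cM - M.trace) :=
      mul_pos (by linarith) (by linarith)
    exact absurd hfact (ne_of_gt hpos1)
  have h2 : 0 < d₀ θ * d₀ θ := mul_self_pos.mpr key
  have h3 : l * (d₀ θ * d₁ θ) = -((1-l) * (d₀ θ * d₀ θ)) := by
    linear_combination (d₀ θ) * hθ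
  have h5 : l * (d₀ θ * d₁ θ) < 0 := by
    rw [h3]
    have := mul_pos (by linarith : (0:ℝ) < 1 - l) h2
    linarith
  have h4 : d₀ θ * d₁ θ < 0 := by
    rcases mul_neg_iff.mp h5 with ⟨_, h⟩ | ⟨h, _⟩
    · exact h
    · linarith
  refine ⟨key, ?_, h4⟩
  intro h
  rw [h, mul_zero] at h4
  exact lt_irrefl 0 h4
end
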